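/- arXiv:0801.4076 — 2 statements merged into one kernel-verified Lean document; each statement's English description precedes it below -/
import Mathlib

section
/- In H₃(O), the adjoint satisfies (a^#)^# = (det a)·a, where det a = (1/3)(a^# : a). -/
open QuadraticMap

variable {k : Type*} [Field k] {O : Type*} [NonAssocRing O] [Module k O]
  [SMulCommClass k O O] [IsScalarTower k O O]

/-- The Cayley conjugate `ã = (a : e)e − a` in a composition algebra. -/
def cconj (n : QuadraticForm k O) (x : O) : O :=
  polar (⇑n) x 1 • (1 : O) - x

/-- An element of `H₃(O)` is encoded by its three diagonal entries `α₁, α₂, α₃ ∈ k`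
together with the three octonion entries `a₁, a₂, a₃ ∈ O`. -/
abbrev H3 (k O : Type*) : Type _ := (Fin 3 → k) × (Fin 3 → O)

/-- The adjoint `a^# = Σᵢ (αⱼαₖ − n(aᵢ)) eᵢ + Σᵢ F̃ᵢ(aⱼaₖ − αᵢãᵢ)`, where `(i,j,k)` runs
over even permutations of `(1,2,3)`. -/
def sharp (n : QuadraticForm k O) (a : H3 k O) : H3 k O :=
  (fun i => a.1 (i + 1) * a.1 (i + 2) - n (a.2 i),
   fun i => cconj n (a.2 (i + 1) * a.2 (i + 2) - a.1 i • cconj n (a.2 i)))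

/-- The Freudenthal product `a × b = (a+b)^# − a^# − b^#`. -/
def fcross (n : QuadraticForm k O) (a b : H3 k O) : H3 k O :=
  sharp n (a + b) - sharp n a - sharp n b

/-- The scalar product `(a : b) = Σᵢ αᵢβᵢ + Σᵢ (aᵢ : bᵢ)` on `H₃(O)`. -/
def sp (n : QuadraticForm k O) (a b : H3 k O) : k :=
  (∑ i, a.1 i * b.1 i) + ∑ i, polar (⇑n) (a.2 i) (b.2 i)

/-- The determinant `det a = (1/3)(a^# : a)`. -/
def det3 (n : QuadraticForm k O) (a : H3 k O) : k :=
  (3 : k)⁻¹ * sp n (sharp n a) a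

/-! Linearising `n(ab) = n(a)n(b)` gives `(ab : cd) + (ad : cb) = (a : c)(b : d)`. Pairing with an
arbitrary element and using nondegeneracy, this yields the Cayley–Hamilton and alternative laws,
`x̄(xz) = n(x)z = (zx)x̄`, `(xy)‾ = ȳx̄` and the middle Moufang formula
`(xy)(zx) = t((yz)x)x − n(x)(yz)‾`, where `t x = (x : 1)`. With these, each entry of `(a^#)^#`
collapses to `N · a`, where `N = α₁α₂α₃ − Σ αᵢ n(aᵢ) + t((a₁a₂)a₃)` is the classical cubic norm, and
the same identities give `(a^# : a) = 3N`. -/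

theorem fin_three_add_cycle (i : Fin 3) :
    i + 1 + 1 = i + 2 ∧ i + 1 + 2 = i ∧ i + 2 + 1 = i ∧ i + 2 + 2 = i + 1 := by
  revert i
  decide

namespace CayleyAlgebra

variable (n : QuadraticForm k O)
  (hm : ∀ a b : O, n (a * b) = n a * n b)
  (hnd : ∀ a : O, (∀ b : O, polar (⇑n) a b = 0) → a = 0)

section

omit [SMulCommClass k O O] [IsScalarTower k O O]

theorem map_sub_eq (x y : O) : n (x - y) = n x + n y - polar (⇑n) x y := by
  have h := QuadraticMap.map_add (⇑n) (x - y) y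
  rw [sub_add_cancel, polar_sub_left, polar_self, two_smul] at h
  linear_combination -h

include hm

theorem polar_mul_left_mul_left (a b c : O) :
    polar (⇑n) (a * b) (a * c) = n a * polar (⇑n) b c := by
  have h := hm a (b + c)
  rw [mul_add, QuadraticMap.map_add (⇑n), QuadraticMap.map_add (⇑n), hm, hm] at h
  linear_combination h

theorem polar_mul_right_mul_right (a b c : O) :
    polar (⇑n) (a * c) (b * c) = polar (⇑n) a b * n c := by
  have h := hm (a + b) c
  rw [add_mul, QuadraticMap.map_add (⇑n), QuadraticMap.map_add (⇑n), hm, hm] at h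
  linear_combination h

theorem polar_mul_mul_add_swap (a b c d : O) :
    polar (⇑n) (a * b) (c * d) + polar (⇑n) (a * d) (c * b)
      = polar (⇑n) a c * polar (⇑n) b d := by
  have h := polar_mul_right_mul_right n hm a c (b + d)
  rw [mul_add, mul_add, QuadraticMap.map_add (⇑n), polar_add_left, polar_add_right,
    polar_add_right, polar_mul_right_mul_right n hm a c b,
    polar_mul_right_mul_right n hm a c d] at h
  linear_combination h

theorem polar_mul_add_polar_mul_right (x y z : O) :
    polar (⇑n) (x * y) z + polar (⇑n) (z * y) x = polar (⇑n) x z * polar (⇑n) y 1 := by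
  have h := polar_mul_mul_add_swap n hm x y z 1
  rw [mul_one, mul_one, polar_comm (⇑n) x (z * y)] at h
  linear_combination h

theorem polar_mul_add_polar_mul_left (x y z : O) :
    polar (⇑n) (x * y) z + polar (⇑n) (x * z) y = polar (⇑n) x 1 * polar (⇑n) y z := by
  have h := polar_mul_mul_add_swap n hm x y 1 z
  rw [one_mul, one_mul] at h
  linear_combination h

theorem polar_mul_one (x y : O) :
    polar (⇑n) (x * y) 1 = polar (⇑n) x 1 * polar (⇑n) y 1 - polar (⇑n) x y := by
  have h := polar_mul_add_polar_mul_right n hm x y 1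
  rw [one_mul, polar_comm (⇑n) y x] at h
  linear_combination h

theorem polar_mul_rotate (x y z : O) :
    polar (⇑n) (y * z) x = polar (⇑n) z 1 * polar (⇑n) x y - polar (⇑n) x 1 * polar (⇑n) y z
      + polar (⇑n) (x * y) z := by
  linear_combination polar_mul_add_polar_mul_right n hm x z y
    - polar_mul_add_polar_mul_left n hm x y z

theorem polar_mul_rotate_rotate (x y z : O) :
    polar (⇑n) (z * x) y = polar (⇑n) z 1 * polar (⇑n) x y - polar (⇑n) y 1 * polar (⇑n) x z
      + polar (⇑n) (x * y) z := by
  linear_combination polar_mul_add_polar_mul_left n hm z x y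
    - polar_mul_add_polar_mul_right n hm x y z

theorem polar_mul_swap (x y z : O) :
    polar (⇑n) (y * x) z = polar (⇑n) x 1 * polar (⇑n) y z - polar (⇑n) z 1 * polar (⇑n) x y
      + polar (⇑n) y 1 * polar (⇑n) x z - polar (⇑n) (x * y) z := by
  linear_combination polar_mul_add_polar_mul_right n hm y x z
    - polar_mul_rotate_rotate n hm x y z

omit hm

theorem cconj_sub (x y : O) : cconj n (x - y) = cconj n x - cconj n y := by
  simp only [cconj, polar_sub_left, sub_smul]
  abel

theorem cconj_smul (r : k) (x : O) : cconj n (r • x) = r • cconj n x := by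
  simp only [cconj, polar_smul_left, smul_eq_mul, mul_smul, smul_sub]

theorem polar_cconj_left (x y : O) :
    polar (⇑n) (cconj n x) y = polar (⇑n) x 1 * polar (⇑n) y 1 - polar (⇑n) x y := by
  simp only [cconj, polar_sub_left, polar_smul_left, smul_eq_mul, polar_comm (⇑n) (1 : O) y]

theorem polar_cconj_right (x y : O) :
    polar (⇑n) x (cconj n y) = polar (⇑n) y 1 * polar (⇑n) x 1 - polar (⇑n) x y := by
  simp only [cconj, polar_sub_right, polar_smul_right, smul_eq_mul]

include hnd in
theorem eq_of_forall_polar_eq {u v : O} (h : ∀ w : O, polar (⇑n) u w = polar (⇑n) v w) :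
    u = v :=
  sub_eq_zero.mp <| hnd (u - v) fun w => by rw [polar_sub_left, h w, sub_self]

include hm hnd

theorem apply_one [Nontrivial O] : n 1 = 1 := by
  have hsq : n 1 * n 1 = n 1 * 1 := by rw [← hm, one_mul, mul_one]
  refine mul_left_cancel₀ (fun h0 => ?_) hsq
  have hzero : ∀ y : O, n y = 0 := fun y => by rw [← one_mul y, hm, h0, zero_mul]
  obtain ⟨x, hx⟩ := exists_ne (0 : O)
  exact hx (hnd x fun b => by simp only [polar, hzero, sub_zero])

theorem polar_one_one [Nontrivial O] : polar (⇑n) 1 (1 : O) = 2 := by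
  rw [polar_self, apply_one n hm hnd]
  norm_num

theorem polar_cconj_one (x : O) : polar (⇑n) (cconj n x) 1 = polar (⇑n) x 1 := by
  obtain _ | _ := subsingleton_or_nontrivial O
  · rw [Subsingleton.elim (cconj n x) x]
  · rw [polar_cconj_left, polar_one_one n hm hnd]
    ring

theorem cconj_cconj (x : O) : cconj n (cconj n x) = x := by
  conv_lhs => rw [cconj, polar_cconj_one n hm hnd, cconj]
  abel

theorem map_cconj (x : O) : n (cconj n x) = n x := by
  obtain _ | _ := subsingleton_or_nontrivial O
  · rw [Subsingleton.elim (cconj n x) x]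
  · rw [cconj, map_sub_eq, QuadraticMap.map_smul, apply_one n hm hnd, polar_smul_left,
      smul_eq_mul, smul_eq_mul, polar_comm]
    ring

theorem mul_self_eq (x : O) : x * x = polar (⇑n) x 1 • x - n x • (1 : O) := by
  refine eq_of_forall_polar_eq n hnd fun w => ?_
  rw [polar_sub_left, polar_smul_left, polar_smul_left, smul_eq_mul, smul_eq_mul]
  have h1 := polar_mul_add_polar_mul_left n hm x x w
  have h2 := polar_mul_left_mul_left n hm x w 1
  rw [mul_one] at h2
  linear_combination h1 - h2 + n x * polar_comm (⇑n) 1 w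

theorem self_mul_self_mul (x z : O) : x * (x * z) = polar (⇑n) x 1 • (x * z) - n x • z := by
  refine eq_of_forall_polar_eq n hnd fun w => ?_
  rw [polar_sub_left, polar_smul_left, polar_smul_left, smul_eq_mul, smul_eq_mul]
  have h1 := polar_mul_add_polar_mul_left n hm x (x * z) w
  have h2 := polar_mul_left_mul_left n hm x w z
  linear_combination h1 - h2 + n x * polar_comm (⇑n) z w

theorem mul_self_mul_self (x z : O) : (z * x) * x = polar (⇑n) x 1 • (z * x) - n x • z := by
  refine eq_of_forall_polar_eq n hnd fun w => ?_
  rw [polar_sub_left, polar_smul_left, polar_smul_left, smul_eq_mul, smul_eq_mul]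
  have h1 := polar_mul_add_polar_mul_right n hm (z * x) x w
  have h2 := polar_mul_right_mul_right n hm w z x
  linear_combination h1 - h2 + n x * polar_comm (⇑n) z w

theorem self_mul_mul_self (x z : O) :
    x * (z * x) = polar (⇑n) (x * z) 1 • x - n x • cconj n z := by
  refine eq_of_forall_polar_eq n hnd fun w => ?_
  rw [polar_sub_left, polar_smul_left, polar_smul_left, smul_eq_mul, smul_eq_mul,
    polar_cconj_left]
  have h1 := polar_mul_add_polar_mul_left n hm x (z * x) w
  have h2 := polar_mul_mul_add_swap n hm x w z x
  have h3 : polar (⇑n) (x * x) (z * w) = polar (⇑n) x 1 * polar (⇑n) x (z * w)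
      - n x * polar (⇑n) 1 (z * w) := by
    rw [mul_self_eq n hm hnd x, polar_sub_left, polar_smul_left, polar_smul_left,
      smul_eq_mul, smul_eq_mul]
  have h4 := polar_mul_add_polar_mul_left n hm z x w
  have h5 := polar_mul_one n hm z w
  have h6 := polar_mul_one n hm x z
  linear_combination h1 - h2 + h3 + polar (⇑n) x 1 * polar_comm (⇑n) x (z * w)
    + polar (⇑n) x 1 * h4 - n x * polar_comm (⇑n) 1 (z * w) - n x * h5
    - polar (⇑n) x w * h6 - polar (⇑n) x z * polar_comm (⇑n) w x

/- Pairing with `w`, the linearised composition law (twice) and the flexible formula for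
`x(zx)` leave only terms `(uv : w)`, which the rotation lemmas bring to a normal form. -/
theorem middle_moufang (x y z : O) :
    (x * y) * (z * x) = polar (⇑n) ((y * z) * x) 1 • x - n x • cconj n (y * z) := by
  refine eq_of_forall_polar_eq n hnd fun w => ?_
  rw [polar_sub_left, polar_smul_left, polar_smul_left, smul_eq_mul, smul_eq_mul,
    polar_cconj_left]
  have h1 := polar_mul_mul_add_swap n hm (x * y) (z * x) w 1
  rw [mul_one, mul_one] at h1
  have h2 := polar_mul_mul_add_swap n hm x y w (z * x)
  have h3 : polar (⇑n) (x * (z * x)) (w * y) = polar (⇑n) (x * z) 1 * polar (⇑n) x (w * y)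
      - n x * polar (⇑n) (cconj n z) (w * y) := by
    rw [self_mul_mul_self n hm hnd x z, polar_sub_left, polar_smul_left, polar_smul_left,
      smul_eq_mul, smul_eq_mul]
  have e1 := polar_mul_one n hm z x
  have e2 := polar_comm (⇑n) y (z * x)
  have e3 := polar_mul_rotate_rotate n hm x y z
  have e4 := polar_comm (⇑n) x (w * y)
  have e5 := polar_mul_add_polar_mul_right n hm x y w
  have e6 := polar_cconj_left n z (w * y)
  have e7 := polar_mul_one n hm w y
  have e8 := polar_comm (⇑n) z (w * y)
  have e9 := polar_mul_add_polar_mul_right n hm z y w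
  have e10 := polar_mul_swap n hm y z w
  have e11 := polar_mul_one n hm (y * z) x
  have e12 := polar_mul_rotate n hm x y z
  have e13 := polar_mul_one n hm y z
  have e14 := polar_mul_one n hm x z
  linear_combination h1 - h2 + h3
    + polar (⇑n) (x * y) w * e1
    - polar (⇑n) x w * e2 - polar (⇑n) x w * e3
    + polar (⇑n) (x * z) 1 * e4 + polar (⇑n) (x * z) 1 * e5
    - n x * e6 - n x * polar (⇑n) z 1 * e7 + n x * e8 + n x * e9 - n x * e10
    - polar (⇑n) x w * e11 + polar (⇑n) x w * e12
    + (n x * polar (⇑n) w 1 - polar (⇑n) x w * polar (⇑n) x 1) * e13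
    + (polar (⇑n) y 1 * polar (⇑n) x w - polar (⇑n) (x * y) w) * e14
    - polar (⇑n) (x * y) w * polar_comm (⇑n) z x
    + n x * polar (⇑n) z 1 * polar_comm (⇑n) w y

end

section

include hm hnd

omit [SMulCommClass k O O] in
theorem cconj_mul_self_mul (x z : O) : cconj n x * (x * z) = n x • z := by
  rw [cconj, sub_mul, smul_mul_assoc, one_mul, self_mul_self_mul n hm hnd x z]
  module

omit [IsScalarTower k O O] in
theorem mul_self_mul_cconj (x z : O) : (z * x) * cconj n x = n x • z := by
  rw [cconj, mul_sub, mul_smul_comm, mul_one, mul_self_mul_self n hm hnd x z]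
  module

theorem cconj_mul (x y : O) : cconj n (x * y) = cconj n y * cconj n x := by
  refine eq_of_forall_polar_eq n hnd fun w => ?_
  rw [polar_cconj_left]
  conv_rhs => rw [cconj, cconj]
  simp only [sub_mul, mul_sub, smul_mul_assoc, mul_smul_comm, one_mul, mul_one, polar_sub_left,
    polar_smul_left, smul_eq_mul]
  linear_combination polar (⇑n) w 1 * polar_mul_one n hm x y
    - polar (⇑n) x 1 * polar (⇑n) y 1 * polar_comm (⇑n) 1 w - polar_mul_swap n hm x y w

end

def cubicNorm (α β γ : k) (a b c : O) : k :=
  α * β * γ - α * n a - β * n b - γ * n c + polar (⇑n) ((a * b) * c) 1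

section

omit [SMulCommClass k O O] [IsScalarTower k O O]

include hm

theorem polar_mul_mul_one_rotate (a b c : O) :
    polar (⇑n) ((b * c) * a) 1 = polar (⇑n) ((a * b) * c) 1 := by
  linear_combination polar_mul_one n hm (b * c) a + polar (⇑n) a 1 * polar_mul_one n hm b c
    - polar_mul_rotate n hm a b c - polar_mul_one n hm (a * b) c
    - polar (⇑n) c 1 * polar_mul_one n hm a b

theorem cubicNorm_rotate (α β γ : k) (a b c : O) :
    cubicNorm n β γ α b c a = cubicNorm n α β γ a b c := by
  simp only [cubicNorm, polar_mul_mul_one_rotate n hm a b c]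
  ring

include hnd

theorem polar_cconj_sub_smul_cconj (α : k) (a b c : O) :
    polar (⇑n) (cconj n (b * c - α • cconj n a)) a
      = polar (⇑n) ((a * b) * c) 1 - 2 * α * n a := by
  rw [polar_cconj_left, polar_sub_left, polar_sub_left, polar_smul_left, polar_smul_left,
    smul_eq_mul, smul_eq_mul, polar_cconj_one n hm hnd, polar_cconj_left, polar_self, two_smul]
  linear_combination polar (⇑n) a 1 * polar_mul_one n hm b c - polar_mul_rotate n hm a b c
    - polar_comm (⇑n) (b * c) a - polar_comm (⇑n) a (b * c) - polar_mul_one n hm (a * b) c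
    - polar (⇑n) c 1 * polar_mul_one n hm a b

theorem cubicNorm_mul_eq (α β γ : k) (a b c : O) :
    cubicNorm n α β γ a b c * α
      = (γ * α - n b) * (α * β - n c) - n (cconj n (b * c - α • cconj n a)) := by
  rw [cubicNorm, map_cconj n hm hnd, map_sub_eq, QuadraticMap.map_smul, map_cconj n hm hnd, hm,
    polar_smul_right, smul_eq_mul, smul_eq_mul, polar_cconj_right]
  linear_combination -α * polar (⇑n) a 1 * polar_mul_one n hm b c
    + α * polar_mul_rotate n hm a b c + α * polar_mul_one n hm (a * b) c
    + α * polar (⇑n) c 1 * polar_mul_one n hm a b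

theorem det3_eq_cubicNorm (h3 : (3 : k) ≠ 0) (a : H3 k O) :
    det3 n a = cubicNorm n (a.1 0) (a.1 1) (a.1 2) (a.2 0) (a.2 1) (a.2 2) := by
  rw [det3, sp, inv_mul_eq_iff_eq_mul₀ h3]
  simp only [sharp, Fin.sum_univ_three, Fin.isValue, Fin.reduceAdd]
  rw [polar_cconj_sub_smul_cconj n hm hnd, polar_cconj_sub_smul_cconj n hm hnd,
    polar_cconj_sub_smul_cconj n hm hnd, polar_mul_mul_one_rotate n hm (a.2 1),
    polar_mul_mul_one_rotate n hm (a.2 0), cubicNorm]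
  ring

theorem det3_eq_cubicNorm_rotate (h3 : (3 : k) ≠ 0) (a : H3 k O) (i : Fin 3) :
    det3 n a
      = cubicNorm n (a.1 i) (a.1 (i + 1)) (a.1 (i + 2)) (a.2 i) (a.2 (i + 1)) (a.2 (i + 2)) := by
  rw [det3_eq_cubicNorm n hm hnd h3]
  fin_cases i
  · rfl
  · exact (cubicNorm_rotate n hm ..).symm
  · exact ((cubicNorm_rotate n hm ..).trans (cubicNorm_rotate n hm ..)).symm

theorem sharp_sharp_fst (a : H3 k O) (i : Fin 3) :
    (sharp n (sharp n a)).1 i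
      = cubicNorm n (a.1 i) (a.1 (i + 1)) (a.1 (i + 2)) (a.2 i) (a.2 (i + 1)) (a.2 (i + 2))
        * a.1 i := by
  obtain ⟨h11, h12, h21, h22⟩ := fin_three_add_cycle i
  simp only [sharp, h11, h12, h21, h22]
  exact (cubicNorm_mul_eq n hm hnd ..).symm

end

include hm hnd in
theorem cubicNorm_smul_eq (α β γ : k) (a b c : O) :
    cubicNorm n α β γ a b c • a
      = cconj n (cconj n (c * a - β • cconj n b) * cconj n (a * b - γ • cconj n c)
          - (β * γ - n a) • cconj n (cconj n (b * c - α • cconj n a))) := by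
  have cc := cconj_cconj n hm hnd
  have h1 : cconj n (cconj n (c * a) * cconj n (a * b)) = (a * b) * (c * a) := by
    rw [← cconj_mul n hm hnd, cc]
  have h2 : cconj n (cconj n (c * a) * c) = n c • a := by
    rw [cconj_mul n hm hnd, cc, cconj_mul_self_mul n hm hnd]
  have h3 : cconj n (b * cconj n (a * b)) = n b • a := by
    rw [cconj_mul n hm hnd, cc, mul_self_mul_cconj n hm hnd]
  simp only [cconj_sub, cconj_smul, cc, sub_mul, mul_sub, smul_mul_assoc, mul_smul_comm]
  rw [h1, h2, h3, middle_moufang n hm hnd, polar_mul_mul_one_rotate n hm, cubicNorm]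
  match_scalars <;> ring

include hm hnd in
theorem sharp_sharp_snd (a : H3 k O) (i : Fin 3) :
    (sharp n (sharp n a)).2 i
      = cubicNorm n (a.1 i) (a.1 (i + 1)) (a.1 (i + 2)) (a.2 i) (a.2 (i + 1)) (a.2 (i + 2))
        • a.2 i := by
  obtain ⟨h11, h12, h21, h22⟩ := fin_three_add_cycle i
  simp only [sharp, h11, h12, h21, h22]
  exact (cubicNorm_smul_eq n hm hnd ..).symm

end CayleyAlgebra

theorem stmt_16_general {k : Type*} [Field k] {O : Type*} [NonAssocRing O] [Module k O]
    [SMulCommClass k O O] [IsScalarTower k O O]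
    (h3 : (3 : k) ≠ 0)
    (n : QuadraticForm k O)
    (hnd : ∀ a : O, (∀ b : O, polar (⇑n) a b = 0) → a = 0)
    (hm : ∀ a b : O, n (a * b) = n a * n b) :
    ∀ a : H3 k O, sharp n (sharp n a) = det3 n a • a := by
  intro a
  ext i
  · rw [CayleyAlgebra.sharp_sharp_fst n hm hnd,
      CayleyAlgebra.det3_eq_cubicNorm_rotate n hm hnd h3 a i]
    rfl
  · rw [CayleyAlgebra.sharp_sharp_snd n hm hnd,
      CayleyAlgebra.det3_eq_cubicNorm_rotate n hm hnd h3 a i]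
    rfl

/-- In `H₃(O)` over a Cayley algebra `O` (an 8-dimensional composition
algebra over `k = ℝ` or `ℂ`), the adjoint satisfies `(a^#)^# = (det a)·a`, where
`det a = (1/3)(a^# : a)`. -/
theorem stmt_16 {k : Type*} [Field k] {O : Type*} [NonAssocRing O] [Module k O]
    [SMulCommClass k O O] [IsScalarTower k O O]
    (h2 : (2 : k) ≠ 0) (h3 : (3 : k) ≠ 0)
    (n : QuadraticForm k O)
    (hnd : ∀ a : O, (∀ b : O, polar (⇑n) a b = 0) → a = 0)
    (hm : ∀ a b : O, n (a * b) = n a * n b)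
    (hdim : Module.finrank k O = 8) :
    ∀ a : H3 k O, sharp n (sharp n a) = det3 n a • a :=
  stmt_16_general h3 n hnd hm
end

section
/- In H₃(O) the identity a^# × (a × b) = (det a)·b + (a^# : b)·a holds for all a, b, where × is the Freudenthal product. -/
/-!
The identity is checked entrywise in the coordinates `(α, x)` of `H₃(O)`. The cyclic shift of
indices `i ↦ i + 1` commutes with `#` and `×` and preserves `(:)` and `det`, so it suffices to
compute one diagonal and one off-diagonal entry. These reduce to identities in `O` that follow
from the multiplicativity of the norm `n` alone, with no associativity assumed: linearizing
`n(xy) = n(x)n(y)` gives identities between values of the polar form `(x : y)`, and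
nondegeneracy turns them into identities between elements, such as `x̄(xy) = n(x)y`,
`(yx)x̄ = n(x)y`, `(xy)‾ = ȳx̄` and an expansion of the middle Moufang product `(pb)(cp)`.
The normalization `n(1) = 1` holds because `O ≠ 0`.
-/

open QuadraticMap

variable {k : Type*} [Field k] {O : Type*} [NonAssocRing O] [Module k O]
  [SMulCommClass k O O] [IsScalarTower k O O]

section Multiplicative

variable {k : Type*} [CommRing k] {O : Type*} [NonAssocRing O] [Module k O]
  {n : QuadraticForm k O}

theorem polar_self_eq_two_mul (x : O) : polar n x x = 2 * n x := by
  rw [polar_self, two_nsmul, two_mul]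

theorem polar_one_one (h1 : n 1 = 1) : polar n (1 : O) 1 = 2 := by
  rw [polar_self_eq_two_mul, h1, mul_one]

theorem polar_mul_mul_right (hm : ∀ a b : O, n (a * b) = n a * n b) (a c b : O) :
    polar n (a * b) (c * b) = polar n a c * n b := by
  simp only [polar, ← add_mul, hm]; ring

theorem polar_mul_mul_left (hm : ∀ a b : O, n (a * b) = n a * n b) (a b d : O) :
    polar n (a * b) (a * d) = n a * polar n b d := by
  simp only [polar, ← mul_add, hm]; ring

theorem polar_mul_add_polar_mul (hm : ∀ a b : O, n (a * b) = n a * n b) (a b c d : O) :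
    polar n (a * b) (c * d) + polar n (a * d) (c * b) = polar n a c * polar n b d := by
  have h := polar_mul_mul_right hm a c (b + d)
  have hbd : n (b + d) = polar n b d + n b + n d := by rw [polar]; ring
  simp only [mul_add, polar_add_left, polar_add_right, polar_mul_mul_right hm, hbd] at h
  linear_combination h

theorem polar_mul_swap_left (hm : ∀ a b : O, n (a * b) = n a * n b) (a b c : O) :
    polar n c (a * b) + polar n a (c * b) = polar n a c * polar n b 1 := by
  have h := polar_mul_add_polar_mul hm a b c 1
  simp only [mul_one, polar_comm n (a * b) c] at h
  linear_combination h

theorem polar_mul_swap_right (hm : ∀ a b : O, n (a * b) = n a * n b) (a b c : O) :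
    polar n c (a * b) + polar n b (a * c) = polar n a 1 * polar n b c := by
  have h := polar_mul_add_polar_mul hm a b 1 c
  simp only [one_mul, polar_comm n (a * b) c, polar_comm n (a * c) b] at h
  linear_combination h

theorem map_one_of_map_mul [NoZeroDivisors k] [Nontrivial O]
    (hm : ∀ a b : O, n (a * b) = n a * n b)
    (hnd : ∀ a : O, (∀ b : O, polar n a b = 0) → a = 0) : n 1 = 1 := by
  have hsq : n 1 * (n 1 - 1) = 0 := by
    have h := hm 1 1
    rw [mul_one] at h
    linear_combination -h
  refine sub_eq_zero.mp <| (mul_eq_zero.mp hsq).resolve_left fun h0 =>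
    one_ne_zero (hnd 1 fun b => ?_)
  have hzero : ∀ z : O, n z = 0 := fun z => by rw [← mul_one z, hm, h0, mul_zero]
  rw [polar, hzero, hzero, hzero, sub_zero, sub_zero]

structure IsCompositionForm (n : QuadraticForm k O) : Prop where
  map_mul : ∀ a b : O, n (a * b) = n a * n b
  map_one : n 1 = 1
  nondegenerate : ∀ a : O, (∀ b : O, polar n a b = 0) → a = 0

theorem IsCompositionForm.eq_of_forall_polar_eq (hn : IsCompositionForm n) {u v : O}
    (h : ∀ d : O, polar n u d = polar n v d) : u = v :=
  sub_eq_zero.mp <| hn.nondegenerate _ fun d => by rw [polar_sub_left, h d, sub_self]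

end Multiplicative

section Conjugation

variable {k : Type*} [Field k] {O : Type*} [NonAssocRing O] [Module k O]
  (n : QuadraticForm k O)

theorem cconj_add (x y : O) : cconj n (x + y) = cconj n x + cconj n y := by
  simp only [cconj, polar_add_left, add_smul]; abel

theorem cconj_sub (x y : O) : cconj n (x - y) = cconj n x - cconj n y := by
  simp only [cconj, polar_sub_left, sub_smul]; abel

theorem cconj_smul (c : k) (x : O) : cconj n (c • x) = c • cconj n x := by
  simp only [cconj, polar_smul_left, smul_sub, smul_eq_mul, mul_smul]

theorem polar_cconj_left (x y : O) :
    polar n (cconj n x) y = polar n x 1 * polar n y 1 - polar n x y := by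
  simp only [cconj, polar_sub_left, polar_smul_left, smul_eq_mul, polar_comm n 1 y]

theorem polar_cconj_right (x y : O) :
    polar n x (cconj n y) = polar n x 1 * polar n y 1 - polar n x y := by
  rw [polar_comm n x, polar_cconj_left, polar_comm n y x, mul_comm]

variable {n}

theorem polar_cconj_one (h1 : n 1 = 1) (x : O) : polar n (cconj n x) 1 = polar n x 1 := by
  rw [polar_cconj_left, polar_one_one h1, mul_two, add_sub_cancel_right]

theorem cconj_cconj (h1 : n 1 = 1) (x : O) : cconj n (cconj n x) = x := by
  rw [cconj, polar_cconj_one h1, cconj, sub_sub_cancel]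

theorem polar_cconj_cconj (h1 : n 1 = 1) (x y : O) :
    polar n (cconj n x) (cconj n y) = polar n x y := by
  rw [polar_cconj_left, polar_cconj_one h1, polar_cconj_right, sub_sub_cancel]

theorem map_cconj (h1 : n 1 = 1) (x : O) : n (cconj n x) = n x := by
  have hsum : cconj n x + x = polar n x 1 • (1 : O) := sub_add_cancel _ _
  have h := polar_cconj_left n x x
  rw [polar, hsum, QuadraticMap.map_smul, h1, polar_self_eq_two_mul, smul_eq_mul] at h
  linear_combination -h

theorem polar_mul_eq_polar_mul_cconj [SMulCommClass k O O]
    (hm : ∀ a b : O, n (a * b) = n a * n b) (a b c : O) :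
    polar n (a * b) c = polar n a (c * cconj n b) := by
  have h := polar_mul_add_polar_mul hm a b c 1
  simp only [mul_one] at h
  simp only [cconj, mul_sub, mul_smul_comm, mul_one, polar_sub_right, polar_smul_right,
    smul_eq_mul, polar_comm n b 1] at h ⊢
  linear_combination h

theorem polar_mul_eq_polar_cconj_mul [IsScalarTower k O O]
    (hm : ∀ a b : O, n (a * b) = n a * n b) (a b c : O) :
    polar n (a * b) c = polar n b (cconj n a * c) := by
  have h := polar_mul_add_polar_mul hm a b 1 c
  simp only [one_mul] at h
  simp only [cconj, sub_mul, smul_mul_assoc, one_mul, polar_sub_right, polar_smul_right,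
    smul_eq_mul, polar_comm n (a * c) b] at h ⊢
  linear_combination h

theorem polar_mul_one [SMulCommClass k O O] (hm : ∀ a b : O, n (a * b) = n a * n b) (a b : O) :
    polar n (a * b) 1 = polar n a 1 * polar n b 1 - polar n a b := by
  rw [polar_mul_eq_polar_mul_cconj hm, one_mul, polar_cconj_right]

theorem polar_cconj_mul_cconj_left [SMulCommClass k O O] [IsScalarTower k O O]
    (hm : ∀ a b : O, n (a * b) = n a * n b) (h1 : n 1 = 1) (u v w : O) :
    polar n (cconj n u * cconj n v) w
      = polar n v 1 * (polar n u 1 * polar n w 1 - polar n u w) - polar n v (u * w) := by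
  rw [polar_mul_eq_polar_cconj_mul hm, cconj_cconj h1, polar_cconj_left, polar_mul_one hm]

theorem polar_cconj_mul_cconj_right [SMulCommClass k O O] [IsScalarTower k O O]
    (hm : ∀ a b : O, n (a * b) = n a * n b) (h1 : n 1 = 1) (u v w : O) :
    polar n w (cconj n u * cconj n v)
      = polar n v 1 * (polar n u 1 * polar n w 1 - polar n u w) - polar n v (u * w) := by
  rw [polar_comm, polar_cconj_mul_cconj_left hm h1]

end Conjugation

namespace IsCompositionForm

variable {k : Type*} [Field k] {O : Type*} [NonAssocRing O] [Module k O]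
  {n : QuadraticForm k O}

theorem cconj_mul_mul [IsScalarTower k O O] (hn : IsCompositionForm n) (a b : O) :
    cconj n a * (a * b) = n a • b :=
  hn.eq_of_forall_polar_eq fun d => by
    rw [polar_mul_eq_polar_cconj_mul hn.map_mul, cconj_cconj hn.map_one,
      polar_mul_mul_left hn.map_mul, polar_smul_left, smul_eq_mul]

theorem cconj_mul_mul_add [IsScalarTower k O O] (hn : IsCompositionForm n) (a c b : O) :
    cconj n a * (c * b) + cconj n c * (a * b) = polar n a c • b :=
  hn.eq_of_forall_polar_eq fun d => by
    rw [polar_add_left, polar_mul_eq_polar_cconj_mul hn.map_mul (cconj n a),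
      polar_mul_eq_polar_cconj_mul hn.map_mul (cconj n c), cconj_cconj hn.map_one,
      cconj_cconj hn.map_one, polar_smul_left, smul_eq_mul]
    linear_combination polar_mul_add_polar_mul hn.map_mul a b c d + polar_comm n (c * b) (a * d)

theorem mul_self_eq [IsScalarTower k O O] (hn : IsCompositionForm n) (a : O) :
    a * a = polar n a 1 • a - n a • 1 := by
  have h := hn.cconj_mul_mul a 1
  simp only [mul_one, cconj, sub_mul, smul_mul_assoc, one_mul] at h
  linear_combination (norm := module) -h

theorem mul_add_mul_swap [IsScalarTower k O O] (hn : IsCompositionForm n) (a b : O) :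
    a * b + b * a = polar n a 1 • b + polar n b 1 • a - polar n a b • 1 := by
  have h := hn.cconj_mul_mul_add a b 1
  simp only [mul_one, cconj, sub_mul, smul_mul_assoc, one_mul] at h
  linear_combination (norm := module) -h

theorem polar_mul_add_polar_mul_swap [IsScalarTower k O O] (hn : IsCompositionForm n) (a b c : O) :
    polar n a (b * c) + polar n a (c * b)
      = polar n b 1 * polar n a c + polar n c 1 * polar n a b - polar n b c * polar n a 1 := by
  rw [← polar_add_right, hn.mul_add_mul_swap, polar_sub_right, polar_add_right,
    polar_smul_right, polar_smul_right, polar_smul_right, smul_eq_mul, smul_eq_mul, smul_eq_mul]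

theorem mul_mul_cconj [SMulCommClass k O O] (hn : IsCompositionForm n) (a b : O) :
    a * b * cconj n b = n b • a :=
  hn.eq_of_forall_polar_eq fun d => by
    rw [polar_mul_eq_polar_mul_cconj hn.map_mul, cconj_cconj hn.map_one, polar_comm,
      polar_mul_mul_right hn.map_mul, polar_smul_left, smul_eq_mul, polar_comm n d, mul_comm]

theorem mul_mul_cconj_add [SMulCommClass k O O] (hn : IsCompositionForm n) (a b c : O) :
    a * b * cconj n c + a * c * cconj n b = polar n b c • a :=
  hn.eq_of_forall_polar_eq fun d => by
    rw [polar_add_left, polar_mul_eq_polar_mul_cconj hn.map_mul (a * b),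
      polar_mul_eq_polar_mul_cconj hn.map_mul (a * c), cconj_cconj hn.map_one,
      cconj_cconj hn.map_one, polar_smul_left, smul_eq_mul]
    linear_combination polar_mul_add_polar_mul hn.map_mul a b d c

variable [SMulCommClass k O O] [IsScalarTower k O O]

theorem cconj_mul (hn : IsCompositionForm n) (a b : O) :
    cconj n (a * b) = cconj n b * cconj n a :=
  hn.eq_of_forall_polar_eq fun d => by
    have hbd := polar_mul_add_polar_mul hn.map_mul a b 1 d
    have hdb := polar_mul_add_polar_mul hn.map_mul a d b 1
    simp only [one_mul, mul_one] at hbd hdb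
    rw [polar_cconj_left, polar_mul_eq_polar_cconj_mul hn.map_mul (cconj n b),
      cconj_cconj hn.map_one, polar_cconj_left, polar_mul_one hn.map_mul,
      polar_mul_one hn.map_mul]
    linear_combination hdb - hbd

theorem mul_mul_self (hn : IsCompositionForm n) (p u : O) :
    p * (u * p) = (polar n p 1 * polar n u 1 - polar n u p) • p - n p • cconj n u := by
  have e1 := hn.cconj_mul_mul_add p u p
  have e2 : p * (u * p) = polar n p 1 • (u * p) - cconj n p * (u * p) := by
    simp only [cconj, sub_mul, smul_mul_assoc, one_mul]; module
  have e3 : cconj n u * (p * p) = polar n p 1 • (cconj n u * p) - n p • cconj n u := by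
    rw [hn.mul_self_eq]; simp only [mul_sub, mul_smul_comm, mul_one]
  have e4 : u * p + cconj n u * p = polar n u 1 • p := by
    simp only [cconj, sub_mul, smul_mul_assoc, one_mul]; module
  linear_combination (norm := module)
    e2 - e1 + e3 + polar n p 1 • e4 - polar_comm n p u • p

-- In an alternative algebra this product is `p(bc)p`.
theorem middle_moufang (hn : IsCompositionForm n) (p b c : O) :
    p * b * (c * p)
      = ((polar n p 1 * polar n c 1 - polar n c p) * polar n b 1 - polar n b (c * p)) • p
        - n p • (cconj n c * cconj n b) := by
  have e1 : p * b * (c * p) = polar n (c * p) 1 • (p * b) - p * b * cconj n (c * p) := by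
    simp only [cconj, mul_sub, mul_smul_comm, mul_one]; module
  have e2 := hn.mul_mul_cconj_add p b (c * p)
  have e3 : p * (c * p) * cconj n b
      = (polar n p 1 * polar n c 1 - polar n c p) • (p * cconj n b)
        - n p • (cconj n c * cconj n b) := by
    rw [hn.mul_mul_self, sub_mul, smul_mul_assoc, smul_mul_assoc]
  have e4 : p * cconj n b = polar n b 1 • p - p * b := by
    simp only [cconj, mul_sub, mul_smul_comm, mul_one]
  rw [hn.cconj_mul] at e1 e2
  rw [e4] at e3
  linear_combination (norm := module) e1 - e2 + e3 + polar_mul_one hn.map_mul c p • (p * b)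

theorem middle_moufang_polar (hn : IsCompositionForm n) (p q b c : O) :
    q * b * (c * p) + p * b * (c * q)
      = ((polar n p 1 * polar n c 1 - polar n c p) * polar n b 1 - polar n b (c * p)) • q
        + ((polar n q 1 * polar n c 1 - polar n c q) * polar n b 1 - polar n b (c * q)) • p
        - polar n p q • (cconj n c * cconj n b) := by
  have hpq := hn.middle_moufang (p + q) b c
  have hnpq : n (p + q) = polar n p q + n p + n q := by rw [polar]; ring
  simp only [add_mul, mul_add, polar_add_left, polar_add_right, hnpq, add_smul] at hpq
  linear_combination (norm := module) hpq - hn.middle_moufang p b c - hn.middle_moufang q b c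

end IsCompositionForm

section Rotation

variable {k O : Type*}

def rotate (a : H3 k O) : H3 k O := (fun i => a.1 (i + 1), fun i => a.2 (i + 1))

theorem rotate_add [Add k] [Add O] (a b : H3 k O) : rotate (a + b) = rotate a + rotate b := rfl

theorem rotate_sub [Sub k] [Sub O] (a b : H3 k O) : rotate (a - b) = rotate a - rotate b := rfl

theorem rotate_smul {R : Type*} [SMul R k] [SMul R O] (c : R) (a : H3 k O) :
    rotate (c • a) = c • rotate a := rfl

theorem eq_of_rotate_equivariant {F G : H3 k O → H3 k O → H3 k O}
    (hF : ∀ a b, F (rotate a) (rotate b) = rotate (F a b))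
    (hG : ∀ a b, G (rotate a) (rotate b) = rotate (G a b))
    (h0 : ∀ a b, (F a b).1 0 = (G a b).1 0 ∧ (F a b).2 0 = (G a b).2 0) (a b : H3 k O) :
    F a b = G a b := by
  have h1 := h0 (rotate a) (rotate b)
  have h2 := h0 (rotate (rotate a)) (rotate (rotate b))
  rw [hF, hG] at h1
  rw [hF, hF, hG, hG] at h2
  refine Prod.ext (funext fun i => ?_) (funext fun i => ?_) <;> fin_cases i
  exacts [(h0 a b).1, h1.1, h2.1, (h0 a b).2, h1.2, h2.2]

end Rotation

section Coordinates

variable {k : Type*} [Field k] {O : Type*} [NonAssocRing O] [Module k O]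
  (n : QuadraticForm k O)

theorem fcross_fst (a b : H3 k O) (i : Fin 3) :
    (fcross n a b).1 i
      = a.1 (i + 1) * b.1 (i + 2) + b.1 (i + 1) * a.1 (i + 2) - polar n (a.2 i) (b.2 i) := by
  simp only [fcross, sharp, Prod.fst_sub, Pi.sub_apply, Prod.fst_add, Pi.add_apply,
    Prod.snd_add, polar]
  ring

theorem fcross_snd (a b : H3 k O) (i : Fin 3) :
    (fcross n a b).2 i
      = cconj n (a.2 (i + 1) * b.2 (i + 2) + b.2 (i + 1) * a.2 (i + 2)
          - a.1 i • cconj n (b.2 i) - b.1 i • cconj n (a.2 i)) := by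
  simp only [fcross, sharp, Prod.snd_sub, Pi.sub_apply, Prod.fst_add, Pi.add_apply,
    Prod.snd_add, cconj_add, cconj_sub, cconj_smul, mul_add, add_mul, add_smul, smul_add]
  abel

variable {n}

theorem sharp_rotate (a : H3 k O) : sharp n (rotate a) = rotate (sharp n a) :=
  Prod.ext (funext fun i => by fin_cases i <;> rfl) (funext fun i => by fin_cases i <;> rfl)

theorem fcross_rotate (a b : H3 k O) :
    fcross n (rotate a) (rotate b) = rotate (fcross n a b) := by
  rw [fcross, ← rotate_add, sharp_rotate, sharp_rotate, sharp_rotate, fcross, rotate_sub,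
    rotate_sub]

theorem sp_rotate (a b : H3 k O) : sp n (rotate a) (rotate b) = sp n a b := by
  simp only [sp, rotate, Fin.sum_univ_three, Fin.isValue, Fin.reduceAdd]
  ring

theorem det3_rotate (a : H3 k O) : det3 n (rotate a) = det3 n a := by
  rw [det3, sharp_rotate, sp_rotate, det3]

end Coordinates

section AdjointIdentity

variable {k : Type*} [Field k] {O : Type*} [NonAssocRing O] [Module k O]
  [SMulCommClass k O O] [IsScalarTower k O O] {n : QuadraticForm k O}

theorem sp_sharp_eq (hn : IsCompositionForm n) (a b : H3 k O) :
    sp n (sharp n a) b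
      = ∑ i, ((a.1 (i + 1) * a.1 (i + 2) - n (a.2 i)) * b.1 i
          + polar n (cconj n (a.2 (i + 1))) (a.2 (i + 2) * b.2 i)
          - a.1 i * polar n (a.2 i) (b.2 i)) := by
  rw [sp, ← Finset.sum_add_distrib]
  refine Finset.sum_congr rfl fun i _ => ?_
  simp only [sharp, cconj_sub, cconj_smul, cconj_cconj hn.map_one, hn.cconj_mul,
    polar_sub_left, polar_smul_left, polar_cconj_mul_cconj_left hn.map_mul hn.map_one,
    polar_cconj_left, polar_mul_one hn.map_mul, smul_eq_mul]
  ring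

theorem det3_eq (hn : IsCompositionForm n) (h3 : (3 : k) ≠ 0) (a : H3 k O) :
    det3 n a
      = a.1 0 * a.1 1 * a.1 2 - a.1 0 * n (a.2 0) - a.1 1 * n (a.2 1) - a.1 2 * n (a.2 2)
        + polar n (cconj n (a.2 1)) (a.2 2 * a.2 0) := by
  rw [det3, inv_mul_eq_iff_eq_mul₀ h3, sp_sharp_eq hn]
  simp only [Fin.sum_univ_three, Fin.isValue, Fin.reduceAdd, polar_self_eq_two_mul,
    polar_cconj_left, polar_mul_one hn.map_mul]
  linear_combination 2 * polar_mul_swap_right hn.map_mul (a.2 2) (a.2 0) (a.2 1)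
    - polar_mul_swap_left hn.map_mul (a.2 0) (a.2 1) (a.2 2)
    - hn.polar_mul_add_polar_mul_swap (a.2 0) (a.2 1) (a.2 2)
    + 2 * polar n (a.2 1) 1 * polar_comm n (a.2 2) (a.2 0)

theorem fcross_sharp_fcross_fst_zero (hn : IsCompositionForm n) (h3 : (3 : k) ≠ 0)
    (a b : H3 k O) :
    (fcross n (sharp n a) (fcross n a b)).1 0
      = det3 n a * b.1 0 + sp n (sharp n a) b * a.1 0 := by
  rw [det3_eq hn h3, sp_sharp_eq hn]
  simp only [Fin.sum_univ_three, Fin.isValue, Fin.reduceAdd, polar_cconj_left,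
    polar_mul_one hn.map_mul]
  obtain ⟨α, x⟩ := a
  obtain ⟨β, y⟩ := b
  simp only [fcross_fst, fcross_snd, sharp, Fin.isValue, Fin.reduceAdd]
  simp only [cconj_sub, cconj_add, cconj_smul, cconj_cconj hn.map_one, hn.cconj_mul,
    polar_add_right, polar_sub_left, polar_sub_right, polar_smul_left, polar_smul_right,
    smul_eq_mul]
  simp only [polar_mul_mul_right hn.map_mul, polar_mul_mul_left hn.map_mul,
    polar_cconj_cconj hn.map_one, map_cconj hn.map_one]
  simp only [polar_cconj_mul_cconj_left hn.map_mul hn.map_one,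
    polar_cconj_mul_cconj_right hn.map_mul hn.map_one, polar_self_eq_two_mul]
  have hm := hn.map_mul
  linear_combination α 0 * (polar_mul_swap_left hm (x 0) (y 1) (x 2)
    - polar_mul_swap_right hm (x 2) (x 0) (y 1) + polar_mul_swap_right hm (x 1) (y 2) (x 0)
    - polar_mul_swap_left hm (y 2) (x 0) (x 1)
    - polar n (y 1) 1 * polar_comm n (x 2) (x 0) - polar n (x 0) 1 * polar_comm n (y 2) (x 1))

theorem fcross_sharp_fcross_snd_zero (hn : IsCompositionForm n) (h3 : (3 : k) ≠ 0)
    (a b : H3 k O) :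
    (fcross n (sharp n a) (fcross n a b)).2 0
      = det3 n a • b.2 0 + sp n (sharp n a) b • a.2 0 := by
  rw [det3_eq hn h3, sp_sharp_eq hn]
  simp only [Fin.sum_univ_three, Fin.isValue, Fin.reduceAdd, polar_cconj_left,
    polar_mul_one hn.map_mul]
  obtain ⟨α, x⟩ := a
  obtain ⟨β, y⟩ := b
  simp only [fcross_fst, fcross_snd, sharp, Fin.isValue, Fin.reduceAdd]
  simp only [cconj_sub, cconj_add, cconj_smul, cconj_cconj hn.map_one, hn.cconj_mul,
    mul_add, add_mul, mul_sub, sub_mul, smul_mul_assoc, mul_smul_comm]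
  have hm := hn.map_mul
  linear_combination (norm := module)
    hn.middle_moufang (x 0) (y 1) (x 2) + hn.middle_moufang (x 0) (x 1) (y 2)
      + hn.middle_moufang_polar (x 0) (y 0) (x 1) (x 2)
      - α 2 • hn.cconj_mul_mul_add (y 2) (x 2) (x 0) - α 2 • hn.cconj_mul_mul (x 2) (y 0)
      - β 2 • hn.cconj_mul_mul (x 2) (x 0)
      - α 1 • hn.mul_mul_cconj_add (x 0) (y 1) (x 1) - α 1 • hn.mul_mul_cconj (y 0) (x 1)
      - β 1 • hn.mul_mul_cconj (x 0) (x 1)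
      + (polar_mul_swap_left hm (x 0) (y 1) (x 2) - polar_mul_swap_right hm (x 2) (x 0) (y 1)
        + polar_mul_swap_right hm (x 1) (y 2) (x 0) - polar_mul_swap_left hm (y 2) (x 0) (x 1)
        - polar n (y 1) 1 * polar_comm n (x 2) (x 0) - polar n (x 0) 1 * polar_comm n (y 2) (x 1)
        + α 1 * polar_comm n (x 1) (y 1) + α 2 * polar_comm n (x 2) (y 2)) • x 0

theorem IsCompositionForm.fcross_sharp_fcross (hn : IsCompositionForm n) (h3 : (3 : k) ≠ 0)
    (a b : H3 k O) :
    fcross n (sharp n a) (fcross n a b) = det3 n a • b + sp n (sharp n a) b • a :=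
  eq_of_rotate_equivariant (F := fun a b => fcross n (sharp n a) (fcross n a b))
    (G := fun a b => det3 n a • b + sp n (sharp n a) b • a)
    (fun a b => by rw [fcross_rotate, sharp_rotate, fcross_rotate])
    (fun a b => by
      rw [det3_rotate, sharp_rotate, sp_rotate, rotate_add, rotate_smul, rotate_smul])
    (fun a b =>
      ⟨fcross_sharp_fcross_fst_zero hn h3 a b, fcross_sharp_fcross_snd_zero hn h3 a b⟩)
    a b

end AdjointIdentity

theorem stmt_17_general {k : Type*} [Field k] {O : Type*} [NonAssocRing O] [Module k O]
    [SMulCommClass k O O] [IsScalarTower k O O]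
    (h3 : (3 : k) ≠ 0)
    (n : QuadraticForm k O)
    (hnd : ∀ a : O, (∀ b : O, polar (⇑n) a b = 0) → a = 0)
    (hm : ∀ a b : O, n (a * b) = n a * n b)
    (hdim : Module.finrank k O = 8) :
    ∀ a b : H3 k O,
      fcross n (sharp n a) (fcross n a b) = det3 n a • b + sp n (sharp n a) b • a := by
  have : Nontrivial O := Module.nontrivial_of_finrank_pos (by rw [hdim]; norm_num)
  exact (IsCompositionForm.mk hm (map_one_of_map_mul hm hnd) hnd).fcross_sharp_fcross h3

/-- In `H₃(O)` over a Cayley algebra `O` (an 8-dimensional composition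
algebra over `k = ℝ` or `ℂ`), the identity `a^# × (a × b) = (det a)·b + (a^# : b)·a`
holds for all `a, b`, where `×` is the Freudenthal product. -/
theorem stmt_17 {k : Type*} [Field k] {O : Type*} [NonAssocRing O] [Module k O]
    [SMulCommClass k O O] [IsScalarTower k O O]
    (h2 : (2 : k) ≠ 0) (h3 : (3 : k) ≠ 0)
    (n : QuadraticForm k O)
    (hnd : ∀ a : O, (∀ b : O, polar (⇑n) a b = 0) → a = 0)
    (hm : ∀ a b : O, n (a * b) = n a * n b)
    (hdim : Module.finrank k O = 8) :
    ∀ a b : H3 k O,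
      fcross n (sharp n a) (fcross n a b) = det3 n a • b + sp n (sharp n a) b • a :=
  stmt_17_general h3 n hnd hm hdim
end
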